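/- For every Y with I ≤ Y (Y an n×n positive definite Hermitian matrix, I the identity), there exists a positive definite matrix A₀ such that, with B₀ = A₀^{-1}, one has A₀ # B₀ = I and Y = A₀^(1/2)((I + (A₀^(-1/2) B₀ A₀^(-1/2))^p)/2)^(1/p) A₀^(1/2) = ((A₀^p + A₀^{-p})/2)^(1/p), for any fixed 0 < p ≤ 1. -/

import Mathlib

open scoped ComplexOrder

/-- The real power of a matrix, via the continuous functional calculus. -/
noncomputable def mpow {n : ℕ} (A : Matrix (Fin n) (Fin n) ℂ) (p : ℝ) :
    Matrix (Fin n) (Fin n) ℂ :=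
  cfc (fun x : ℝ => x ^ p) A

/-- The matrix geometric mean `A # B = A^(1/2) (A^(-1/2) B A^(-1/2))^(1/2) A^(1/2)`. -/
noncomputable def geomMean {n : ℕ} (A B : Matrix (Fin n) (Fin n) ℂ) :
    Matrix (Fin n) (Fin n) ℂ :=
  mpow A (1 / 2) * mpow (mpow A (-(1 / 2)) * B * mpow A (-(1 / 2))) (1 / 2) * mpow A (1 / 2)

/-- The Kubo–Ando matrix power mean
`P_μ(p, A, B) = A^(1/2) ((I + (A^(-1/2) B A^(-1/2))^p)/2)^(1/p) A^(1/2)`. -/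
noncomputable def Pmu {n : ℕ} (p : ℝ) (A B : Matrix (Fin n) (Fin n) ℂ) :
    Matrix (Fin n) (Fin n) ℂ :=
  mpow A (1 / 2) *
    mpow ((2 : ℂ)⁻¹ • (1 + mpow (mpow A (-(1 / 2)) * B * mpow A (-(1 / 2))) p)) (1 / p) *
    mpow A (1 / 2)

/-!
Take `A₀ = g(Y)` for a scalar function `g`. All matrices involved are then functions of the single
self-adjoint matrix `Y`, so by the functional calculus every identity reduces to a scalar identity
on `spectrum ℝ Y ⊆ [1, ∞)`. For a scalar `x > 0` the geometric mean of `x` and `x⁻¹` is `1`, and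
`P(p, x, x⁻¹) = ((x ^ p + x ^ (-p)) / 2) ^ (1 / p)`; this function maps `(0, ∞)` onto `[1, ∞)`, with
right inverse `g y = (s + √(s ^ 2 - 1)) ^ (1 / p)`, `s = y ^ p`, obtained by solving
`t + t⁻¹ = 2 s` for `t = x ^ p`.
-/

open scoped MatrixOrder

noncomputable def symmPowerMean (p x : ℝ) : ℝ := (2⁻¹ * (x ^ p + x ^ (-p))) ^ (1 / p)

noncomputable def symmPowerMeanInv (p y : ℝ) : ℝ := (y ^ p + √((y ^ p) ^ 2 - 1)) ^ (1 / p)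

section Scalar

variable {p x y : ℝ}

lemma one_le_add_sqrt_sq_sub_one {s : ℝ} (hs : 1 ≤ s) : 1 ≤ s + √(s ^ 2 - 1) :=
  hs.trans (le_add_of_nonneg_right (Real.sqrt_nonneg _))

lemma inv_add_sqrt_sq_sub_one {s : ℝ} (hs : 1 ≤ s) : (s + √(s ^ 2 - 1))⁻¹ = s - √(s ^ 2 - 1) := by
  refine inv_eq_of_mul_eq_one_right ?_
  have hsq : √(s ^ 2 - 1) ^ 2 = s ^ 2 - 1 := Real.sq_sqrt (by nlinarith)
  linear_combination -hsq

lemma symmPowerMeanInv_pos (hp : 0 < p) (hy : 1 ≤ y) : 0 < symmPowerMeanInv p y :=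
  Real.rpow_pos_of_pos
    (one_pos.trans_le (one_le_add_sqrt_sq_sub_one (Real.one_le_rpow hy hp.le))) _

lemma symmPowerMean_symmPowerMeanInv (hp : 0 < p) (hy : 1 ≤ y) :
    symmPowerMean p (symmPowerMeanInv p y) = y := by
  have hs : 1 ≤ y ^ p := Real.one_le_rpow hy hp.le
  set t := y ^ p + √((y ^ p) ^ 2 - 1)
  have ht : 0 < t := one_pos.trans_le (one_le_add_sqrt_sq_sub_one hs)
  have hxp : (t ^ (1 / p)) ^ p = t := by
    rw [← Real.rpow_mul ht.le, one_div_mul_cancel hp.ne', Real.rpow_one]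
  have hmean : 2⁻¹ * ((t ^ (1 / p)) ^ p + (t ^ (1 / p)) ^ (-p)) = y ^ p := by
    rw [Real.rpow_neg (Real.rpow_nonneg ht.le _), hxp, inv_add_sqrt_sq_sub_one hs]
    ring
  rw [symmPowerMean, symmPowerMeanInv, hmean, ← Real.rpow_mul (by linarith),
    mul_one_div_cancel hp.ne', Real.rpow_one]

lemma rpow_neg_half_mul_inv_mul_rpow_neg_half (hx : 0 < x) :
    x ^ (-(1 / 2) : ℝ) * x⁻¹ * x ^ (-(1 / 2) : ℝ) = x ^ (-2 : ℝ) := by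
  rw [← Real.rpow_neg_one, ← Real.rpow_add hx, ← Real.rpow_add hx]
  norm_num

lemma rpow_half_mul_rpow_neg_two_rpow_half_mul_rpow_half (hx : 0 < x) :
    x ^ (1 / 2 : ℝ) * (x ^ (-2 : ℝ)) ^ (1 / 2 : ℝ) * x ^ (1 / 2 : ℝ) = 1 := by
  rw [← Real.rpow_mul hx.le, ← Real.rpow_add hx, ← Real.rpow_add hx]
  norm_num

lemma rpow_half_mul_mean_one_rpow_neg_two_mul_rpow_half (hp : p ≠ 0) (hx : 0 < x) :
    x ^ (1 / 2 : ℝ) * (2⁻¹ * (1 + (x ^ (-2 : ℝ)) ^ p)) ^ (1 / p) * x ^ (1 / 2 : ℝ) =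
      symmPowerMean p x := by
  have hfactor : 2⁻¹ * (1 + (x ^ (-2 : ℝ)) ^ p) = x ^ (-p) * (2⁻¹ * (x ^ p + x ^ (-p))) := by
    have hinv : x ^ (-p) * x ^ p = 1 := by rw [← Real.rpow_add hx, neg_add_cancel, Real.rpow_zero]
    have hsq : x ^ (-p) * x ^ (-p) = x ^ (-2 * p) := by rw [← Real.rpow_add hx]; ring_nf
    rw [← Real.rpow_mul hx.le]
    linear_combination (-1 / 2 : ℝ) * hinv - (1 / 2 : ℝ) * hsq
  have hxhalf : x ^ (1 / 2 : ℝ) * x ^ (1 / 2 : ℝ) = x := by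
    rw [← Real.rpow_add hx]; norm_num
  rw [hfactor, Real.mul_rpow (Real.rpow_nonneg hx.le _) (by positivity), ← Real.rpow_mul hx.le,
    neg_mul, mul_one_div_cancel hp, symmPowerMean]
  calc x ^ (1 / 2 : ℝ) * (x ^ (-1 : ℝ) * (2⁻¹ * (x ^ p + x ^ (-p))) ^ (1 / p)) * x ^ (1 / 2 : ℝ)
      = (x ^ (1 / 2 : ℝ) * x ^ (1 / 2 : ℝ)) * x ^ (-1 : ℝ) *
          (2⁻¹ * (x ^ p + x ^ (-p))) ^ (1 / p) := by ring
    _ = _ := by rw [hxhalf, Real.rpow_neg_one, mul_inv_cancel₀ hx.ne', one_mul]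

end Scalar

section Matrix

variable {m 𝕜 : Type*} [Fintype m] [DecidableEq m] [RCLike 𝕜]

lemma continuousOn_spectrum_real (f : ℝ → ℝ) (A : Matrix m m 𝕜) :
    ContinuousOn f (spectrum ℝ A) :=
  Matrix.finite_real_spectrum.continuousOn f

lemma cfc_cfc {A : Matrix m m 𝕜} (hA : IsSelfAdjoint A) (f g : ℝ → ℝ) :
    cfc g (cfc f A) = cfc (fun x => g (f x)) A :=
  (cfc_comp' g f A (Matrix.finite_real_spectrum.image f |>.continuousOn g)
    (continuousOn_spectrum_real f A) hA).symm

lemma cfc_mul_cfc_mul_cfc (f g h : ℝ → ℝ) (A : Matrix m m 𝕜) :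
    cfc f A * cfc g A * cfc h A = cfc (fun x => f x * g x * h x) A := by
  rw [cfc_mul _ _ A (continuousOn_spectrum_real _ A) (continuousOn_spectrum_real _ A),
    cfc_mul _ _ A (continuousOn_spectrum_real _ A) (continuousOn_spectrum_real _ A)]

lemma two_inv_smul_add_cfc (f g : ℝ → ℝ) (A : Matrix m m 𝕜) :
    (2 : 𝕜)⁻¹ • (cfc f A + cfc g A) = cfc (fun x => 2⁻¹ * (f x + g x)) A := by
  rw [cfc_const_mul _ _ A (continuousOn_spectrum_real _ A),
    cfc_add A f g (continuousOn_spectrum_real f A) (continuousOn_spectrum_real g A),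
    RCLike.real_smul_eq_coe_smul (K := 𝕜), RCLike.ofReal_inv, RCLike.ofReal_ofNat]

lemma posDef_cfc {A : Matrix m m 𝕜} (hA : IsSelfAdjoint A) {f : ℝ → ℝ}
    (hf : ∀ x ∈ spectrum ℝ A, 0 < f x) : (cfc f A).PosDef :=
  Matrix.isStrictlyPositive_iff_posDef.mp <|
    (cfc_isStrictlyPositive_iff f A (continuousOn_spectrum_real f A) hA).mpr hf

namespace Matrix.PosDef

variable {A : Matrix m m 𝕜}

lemma spectrum_pos (hA : A.PosDef) : ∀ x ∈ spectrum ℝ A, 0 < x :=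
  (StarOrderedRing.isStrictlyPositive_iff_spectrum_pos A).mp hA.isStrictlyPositive

lemma inv_eq_cfc (hA : A.PosDef) : A⁻¹ = cfc (fun x : ℝ => x⁻¹) A := by
  rw [Matrix.nonsing_inv_eq_ringInverse, cfc_ringInverse_id A hA.isUnit]

end Matrix.PosDef

end Matrix

section MatrixPower

variable {n : ℕ} {A : Matrix (Fin n) (Fin n) ℂ}

lemma mpow_cfc (hA : IsSelfAdjoint A) (f : ℝ → ℝ) (q : ℝ) :
    mpow (cfc f A) q = cfc (fun x => f x ^ q) A :=
  cfc_cfc hA f _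

lemma mpow_two_inv_smul_mpow_add_mpow_neg (hA : IsSelfAdjoint A) (p : ℝ) :
    mpow ((2 : ℂ)⁻¹ • (mpow A p + mpow A (-p))) (1 / p) = cfc (symmPowerMean p) A := by
  have := mpow_cfc hA (fun x => 2⁻¹ * (x ^ p + x ^ (-p))) (1 / p)
  rwa [← two_inv_smul_add_cfc] at this

namespace Matrix.PosDef

lemma mpow_neg_half_mul_inv_mul_mpow_neg_half (hA : A.PosDef) :
    mpow A (-(1 / 2)) * A⁻¹ * mpow A (-(1 / 2)) = cfc (fun x : ℝ => x ^ (-2 : ℝ)) A := by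
  rw [hA.inv_eq_cfc, mpow, cfc_mul_cfc_mul_cfc]
  exact cfc_congr fun x hx => rpow_neg_half_mul_inv_mul_rpow_neg_half (hA.spectrum_pos x hx)

lemma geomMean_inv_self (hA : A.PosDef) : geomMean A A⁻¹ = 1 := by
  rw [geomMean, hA.mpow_neg_half_mul_inv_mul_mpow_neg_half, mpow_cfc hA.isHermitian.isSelfAdjoint,
    mpow, cfc_mul_cfc_mul_cfc, ← cfc_const_one ℝ A]
  exact cfc_congr fun x hx =>
    rpow_half_mul_rpow_neg_two_rpow_half_mul_rpow_half (hA.spectrum_pos x hx)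

lemma pmu_inv_self (hA : A.PosDef) {p : ℝ} (hp : p ≠ 0) :
    Pmu p A A⁻¹ = mpow ((2 : ℂ)⁻¹ • (mpow A p + mpow A (-p))) (1 / p) := by
  have hsa : IsSelfAdjoint A := hA.isHermitian.isSelfAdjoint
  rw [Pmu, hA.mpow_neg_half_mul_inv_mul_mpow_neg_half, mpow_cfc hsa, ← cfc_const_one ℝ A,
    two_inv_smul_add_cfc, mpow_cfc hsa, mpow, cfc_mul_cfc_mul_cfc,
    mpow_two_inv_smul_mpow_add_mpow_neg hsa]
  exact cfc_congr fun x hx =>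
    rpow_half_mul_mean_one_rpow_neg_two_mul_rpow_half hp (hA.spectrum_pos x hx)

end Matrix.PosDef

end MatrixPower

theorem inverse_problem_geom_power_mean_general {n : ℕ} (p : ℝ) (hp0 : 0 < p)
    {Y : Matrix (Fin n) (Fin n) ℂ} (hY : Y.PosDef) (hIY : (Y - 1).PosSemidef) :
    ∃ A₀ : Matrix (Fin n) (Fin n) ℂ, A₀.PosDef ∧
      geomMean A₀ A₀⁻¹ = 1 ∧
      Y = Pmu p A₀ A₀⁻¹ ∧
      Y = mpow ((2 : ℂ)⁻¹ • (mpow A₀ p + mpow A₀ (-p))) (1 / p) := by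
  have hsa : IsSelfAdjoint Y := hY.isHermitian.isSelfAdjoint
  -- `(Y - 1).PosSemidef` is `1 ≤ Y` in the Loewner order
  have hspec : ∀ y ∈ spectrum ℝ Y, 1 ≤ y := (CFC.one_le_iff Y).mp hIY
  have hA₀ : (cfc (symmPowerMeanInv p) Y).PosDef :=
    posDef_cfc hsa fun y hy => symmPowerMeanInv_pos hp0 (hspec y hy)
  have hY_eq : Y = mpow ((2 : ℂ)⁻¹ • (mpow (cfc (symmPowerMeanInv p) Y) p +
      mpow (cfc (symmPowerMeanInv p) Y) (-p))) (1 / p) := by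
    rw [mpow_two_inv_smul_mpow_add_mpow_neg hA₀.isHermitian.isSelfAdjoint, cfc_cfc hsa]
    nth_rw 1 [← cfc_id' ℝ Y]
    exact cfc_congr fun y hy => (symmPowerMean_symmPowerMeanInv hp0 (hspec y hy)).symm
  exact ⟨_, hA₀, hA₀.geomMean_inv_self, hY_eq.trans (hA₀.pmu_inv_self hp0.ne').symm, hY_eq⟩

theorem inverse_problem_geom_power_mean {n : ℕ} (p : ℝ) (hp0 : 0 < p) (hp1 : p ≤ 1)
    {Y : Matrix (Fin n) (Fin n) ℂ} (hY : Y.PosDef) (hIY : (Y - 1).PosSemidef) :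
    ∃ A₀ : Matrix (Fin n) (Fin n) ℂ, A₀.PosDef ∧
      geomMean A₀ A₀⁻¹ = 1 ∧
      Y = Pmu p A₀ A₀⁻¹ ∧
      Y = mpow ((2 : ℂ)⁻¹ • (mpow A₀ p + mpow A₀ (-p))) (1 / p) :=
  inverse_problem_geom_power_mean_general p hp0 hY hIY
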